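/- arXiv:2202.01412 — 6 statements merged into one kernel-verified Lean document; each statement's English description precedes it below -/
import Mathlib

section
/- Let G be a locally finite graph and χ : V(G) → ℤ. If there exists a real-valued flow g in G with f^out(g)(u) = χ(u) for every vertex u, then there exists an integer-valued flow f in G with f^out(f)(u) = χ(u) for every vertex u and |f(u,v) − g(u,v)| < 1 for all u,v ∈ V(G). -/
/-!
Finite case: in a real flow whose outflows are all integers, no vertex is incident to exactly one
edge with a fractional value, so the fractional edges, if any, contain a cycle. Pushing flow
around that cycle until one of its edges reaches its ceiling makes that edge integral, keeps the
outflows, and stays in the box `⌊g⌋ ≤ · ≤ ⌈g⌉` of the starting flow `g`. Iterating gives an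
integral flow in the box.

Locally finite case: integral flows in the box form a compact subset of `V → V → ℤ`, and the
conservation law at each vertex is a closed condition. By compactness it suffices to satisfy
the conservation law on a finite set `s` of vertices, which is the finite case applied to the
neighbourhood of `s` with everything else contracted to one extra vertex.
-/

open Finset

namespace SimpleGraph

variable {V : Type*} {G : SimpleGraph V}

lemma IsAcyclic.exists_existsUnique_adj [Finite V] (hG : G.IsAcyclic) {a b : V}
    (hab : G.Adj a b) : ∃ u, ∃! w, G.Adj u w := by
  have : Nonempty V := ⟨a⟩
  obtain ⟨u, v, p, hp, hmax⟩ := Walk.exists_isPath_forall_isPath_length_le_length G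
  have hnil : ¬ p.Nil := by
    intro hnil
    have := hmax a b (.cons hab .nil) (by simp [hab.ne])
    simp [Walk.length_eq_zero_iff.2 hnil] at this
  refine ⟨u, p.snd, p.adj_snd hnil, fun w hw => hG.eq_snd_of_adj_start hp hw ?_⟩
  by_contra hwp
  have := hmax w v (.cons hw.symm p) (hp.cons hwp)
  simp at this

namespace Walk

variable [DecidableEq V]

def circulation : ∀ {u v : V}, G.Walk u v → V → V → ℤ
  | _, _, nil => 0
  | _, _, cons (u := a) (v := b) _ p => fun x y =>
      ((if x = a ∧ y = b then 1 else 0) - if x = b ∧ y = a then 1 else 0) + p.circulation x y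

lemma circulation_antisymm {u v : V} (p : G.Walk u v) (x y : V) :
    p.circulation x y = -p.circulation y x := by
  induction p with
  | nil => simp [circulation]
  | cons _ p ih => simp only [circulation, ih, and_comm]; ring

lemma sum_circulation [Fintype V] {u v : V} (p : G.Walk u v) (x : V) :
    ∑ y, p.circulation x y = (if x = u then 1 else 0) - if x = v then 1 else 0 := by
  induction p with
  | nil => simp [circulation]
  | cons _ p ih => simp [circulation, sum_add_distrib, ih, ite_and]

lemma circulation_eq_zero_of_notMem_edges {u v x y : V} (p : G.Walk u v)
    (h : s(x, y) ∉ p.edges) : p.circulation x y = 0 := by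
  induction p with
  | nil => rfl
  | cons _ p ih =>
    simp only [edges_cons, List.mem_cons, not_or] at h
    simp only [circulation, ih h.2]
    grind

lemma IsCycle.circulation_snd {u : V} {p : G.Walk u u} (hp : p.IsCycle) :
    p.circulation u p.snd = 1 := by
  cases p with
  | nil => exact absurd hp not_isCycle_nil
  | cons h q =>
    simp [circulation, circulation_eq_zero_of_notMem_edges q ((cons_isCycle_iff q h).1 hp).2, h.ne]

end Walk

end SimpleGraph

open SimpleGraph

section FractionalGraph

variable {α : Type*}

/-- `(⊥ : Subring ℝ)` is the image of `ℤ` in `ℝ`. -/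
def fracGraph (f : α → α → ℝ) : SimpleGraph α :=
  SimpleGraph.fromRel fun u v => f u v ∉ (⊥ : Subring ℝ)

lemma fracGraph_adj {f : α → α → ℝ} (hf : ∀ u v, f u v = -f v u) {u v : α} :
    (fracGraph f).Adj u v ↔ f u v ∉ (⊥ : Subring ℝ) := by
  have hswap : f v u ∈ (⊥ : Subring ℝ) ↔ f u v ∈ (⊥ : Subring ℝ) := by rw [hf v u, neg_mem_iff]
  simp only [fracGraph, fromRel_adj, hswap, or_self, and_iff_right_iff_imp]
  rintro h rfl
  exact h (by rw [show f u u = 0 by linarith [hf u u]]; exact zero_mem _)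

lemma floor_le_of_le_ceil {f g : α → α → ℝ} (hf : ∀ u v, f u v = -f v u)
    (hg : ∀ u v, g u v = -g v u) (h : ∀ u v, f u v ≤ ⌈g u v⌉) (u v : α) : ⌊g u v⌋ ≤ f u v := by
  rw [hf, hg u v, Int.floor_neg, Int.cast_neg, neg_le_neg_iff]
  exact h v u

variable [Fintype α] {f : α → α → ℝ}

lemma fracGraph_not_isAcyclic (hf : ∀ u v, f u v = -f v u)
    (hrow : ∀ u, ∑ v, f u v ∈ (⊥ : Subring ℝ)) {a b : α} (hab : f a b ∉ (⊥ : Subring ℝ)) :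
    ¬ (fracGraph f).IsAcyclic := by
  classical
  intro hac
  obtain ⟨u, w, huw, huniq⟩ := hac.exists_existsUnique_adj ((fracGraph_adj hf).2 hab)
  have hrest : ∑ v ∈ univ.erase w, f u v ∈ (⊥ : Subring ℝ) := Subring.sum_mem _ fun v hv => by
    by_contra h
    exact ne_of_mem_erase hv (huniq v ((fracGraph_adj hf).2 h))
  refine (fracGraph_adj hf).1 huw ?_
  have := sub_mem (hrow u) hrest
  rwa [← add_sum_erase _ _ (mem_univ w), add_sub_cancel_right] at this

lemma exists_fracGraph_lt (hf : ∀ u v, f u v = -f v u)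
    (hrow : ∀ u, ∑ v, f u v ∈ (⊥ : Subring ℝ)) {a b : α} (hab : f a b ∉ (⊥ : Subring ℝ)) :
    ∃ f' : α → α → ℝ, (∀ u v, f' u v = -f' v u) ∧ (∀ u, ∑ v, f' u v = ∑ v, f u v) ∧
      (∀ u v, f' u v ≤ ⌈f u v⌉) ∧ fracGraph f' < fracGraph f := by
  classical
  obtain ⟨u, c, hc⟩ : ∃ u, ∃ c : (fracGraph f).Walk u u, c.IsCycle := by
    by_contra! h
    exact fracGraph_not_isAcyclic hf hrow hab h
  set d := c.circulation
  have hd_adj : ∀ x y, d x y ≠ 0 → (fracGraph f).Adj x y := fun x y h =>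
    c.adj_of_mem_edges (not_imp_comm.1 c.circulation_eq_zero_of_notMem_edges h)
  set P := univ.filter fun p : α × α => 0 < d p.1 p.2
  have hP : P.Nonempty := ⟨(u, c.snd), by simp [P, d, hc.circulation_snd]⟩
  -- `ε` is the largest multiple of `d` that keeps every edge below its ceiling.
  set slack : α × α → ℝ := fun p => (⌈f p.1 p.2⌉ - f p.1 p.2) / d p.1 p.2
  obtain ⟨⟨x₀, y₀⟩, hp₀, hmin⟩ := P.exists_min_image slack hP
  set ε := slack (x₀, y₀)
  have hd₀ : 0 < d x₀ y₀ := (mem_filter.1 hp₀).2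
  have hε : 0 ≤ ε := div_nonneg (sub_nonneg.2 (Int.le_ceil _)) (by positivity)
  set f' : α → α → ℝ := fun x y => f x y + ε * d x y
  have hf' : ∀ x y, f' x y = -f' y x := fun x y => by
    simp only [f', hf x y, show d x y = -d y x from c.circulation_antisymm x y]
    push_cast
    ring
  refine ⟨f', hf', fun x => ?_, fun x y => ?_, lt_of_le_of_ne (fun x y hxy => ?_) fun heq => ?_⟩
  · simp only [f', sum_add_distrib, ← mul_sum, ← Int.cast_sum, d, c.sum_circulation, sub_self,
      Int.cast_zero, mul_zero, add_zero]
  · rcases lt_or_ge 0 (d x y) with h | h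
    · have := hmin (x, y) (by simp [P, h])
      rw [le_div_iff₀ (by exact_mod_cast h)] at this
      linarith
    · have : ε * d x y ≤ 0 := mul_nonpos_of_nonneg_of_nonpos hε (by exact_mod_cast h)
      linarith [Int.le_ceil (f x y)]
  · by_cases h : d x y = 0
    · rwa [fracGraph_adj hf, show f x y = f' x y by simp [f', h], ← fracGraph_adj hf']
    · exact hd_adj x y h
  · have hadj := hd_adj x₀ y₀ hd₀.ne'
    rw [← heq, fracGraph_adj hf'] at hadj
    refine hadj (Subring.mem_bot.2 ⟨⌈f x₀ y₀⌉, ?_⟩)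
    simp only [f', ε, slack, div_mul_cancel₀ _ (by exact_mod_cast hd₀.ne' : (d x₀ y₀ : ℝ) ≠ 0)]
    ring

theorem exists_int_flow_of_fintype (g : α → α → ℝ) (hg : ∀ u v, g u v = -g v u)
    (hrow : ∀ u, ∑ v, g u v ∈ (⊥ : Subring ℝ)) :
    ∃ f : α → α → ℤ, (∀ u v, f u v = -f v u) ∧ (∀ u v, ⌊g u v⌋ ≤ f u v ∧ f u v ≤ ⌈g u v⌉) ∧
      ∀ u, ∑ v, (f u v : ℝ) = ∑ v, g u v := by
  suffices ∃ f : α → α → ℤ, (∀ u v, f u v = -f v u) ∧ (∀ u v, f u v ≤ ⌈g u v⌉) ∧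
      ∀ u, ∑ v, (f u v : ℝ) = ∑ v, g u v by
    obtain ⟨f, hf, hfg, hsum⟩ := this
    refine ⟨f, hf, fun u v => ⟨?_, hfg u v⟩, hsum⟩
    exact_mod_cast floor_le_of_le_ceil (f := fun u v => (f u v : ℝ)) (by exact_mod_cast hf) hg
      (by exact_mod_cast hfg) u v
  induction hH : fracGraph g using WellFoundedLT.induction generalizing g with
  | _ H ih =>
  by_cases hfrac : ∃ a b, g a b ∉ (⊥ : Subring ℝ)
  · obtain ⟨a, b, hab⟩ := hfrac
    obtain ⟨g', hg', hsum', hle', hlt⟩ := exists_fracGraph_lt hg hrow hab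
    obtain ⟨f, hf, hfg', hsum⟩ := ih _ (hH ▸ hlt) g' hg' (fun u => hsum' u ▸ hrow u) rfl
    refine ⟨f, hf, fun u v => (hfg' u v).trans (Int.ceil_le.2 (hle' u v)), fun u => ?_⟩
    rw [hsum, hsum']
  · have hfloor : ∀ u v, (⌊g u v⌋ : ℝ) = g u v := fun u v => by
      obtain ⟨n, hn⟩ := Subring.mem_bot.1 (not_not.1 (not_exists.1 (not_exists.1 hfrac u) v))
      rw [← hn, Int.floor_intCast]
    refine ⟨fun u v => ⌊g u v⌋, fun u v => ?_, fun u v => Int.floor_le_ceil _, fun u => ?_⟩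
    · exact_mod_cast (hfloor u v).trans ((hg u v).trans (congrArg Neg.neg (hfloor v u).symm))
    · simp only [hfloor]

end FractionalGraph

section Sink

variable {β : Type*} [Fintype β]

/-- `g` together with an extra vertex `none` that absorbs the outflow of every vertex, so that
all outflows of `withSink g` vanish. -/
def withSink (g : β → β → ℝ) : Option β → Option β → ℝ
  | some a, some b => g a b
  | some a, none => -∑ b, g a b
  | none, some b => ∑ a, g b a
  | none, none => 0

variable {g : β → β → ℝ}

lemma withSink_antisymm (hg : ∀ a b, g a b = -g b a) :
    ∀ x y, withSink g x y = -withSink g y x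
  | some a, some b => hg a b
  | some _, none => rfl
  | none, some _ => (neg_neg _).symm
  | none, none => neg_zero.symm

lemma sum_withSink (hg : ∀ a b, g a b = -g b a) (x : Option β) : ∑ y, withSink g x y = 0 := by
  cases x with
  | some a => simp [withSink, Fintype.sum_option]
  | none =>
    have h : ∑ b, ∑ a, g b a = ∑ a, ∑ b, -g a b := by
      rw [sum_comm]
      exact sum_congr rfl fun a _ => sum_congr rfl fun b _ => hg b a
    simp only [sum_neg_distrib] at h
    simp only [withSink, Fintype.sum_option]
    linarith

lemma sum_some_eq_of_withSink (hg : ∀ a b, g a b = -g b a) {F : Option β → Option β → ℤ}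
    (hF : ∀ x y, ⌊withSink g x y⌋ ≤ F x y ∧ F x y ≤ ⌈withSink g x y⌉)
    (hFsum : ∀ x, ∑ y, (F x y : ℝ) = ∑ y, withSink g x y) {a : β} {n : ℤ}
    (hn : ∑ b, g a b = n) : ∑ b, F (some a) (some b) = n := by
  have hsink : F (some a) none = -n := by
    have := hF (some a) none
    rw [withSink, hn, ← Int.cast_neg, Int.floor_intCast, Int.ceil_intCast] at this
    omega
  have hrow : ∑ y, F (some a) y = 0 := by
    exact_mod_cast (hFsum (some a)).trans (sum_withSink hg _)
  rw [Fintype.sum_option, hsink] at hrow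
  linarith

end Sink

section Compactness

variable {V : Type*} {g : V → V → ℝ} {χ : V → ℤ}

lemma eq_zero_of_floor_le_of_le_ceil {z : ℤ} {x : ℝ} (hz : ⌊x⌋ ≤ z ∧ z ≤ ⌈x⌉) (hx : x = 0) :
    z = 0 := by
  subst hx
  simp only [Int.floor_zero, Int.ceil_zero] at hz
  omega

lemma exists_int_flow_on_finset (hg : ∀ u v, g u v = -g v u) (N : V → Finset V)
    (hN : ∀ u v, g u v ≠ 0 → v ∈ N u) (hχ : ∀ u, ∑ v ∈ N u, g u v = χ u) (s : Finset V) :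
    ∃ f : V → V → ℤ, (∀ u v, ⌊g u v⌋ ≤ f u v ∧ f u v ≤ ⌈g u v⌉) ∧
      ∀ u ∈ s, (∀ v, f u v = -f v u) ∧ ∑ v ∈ N u, f u v = χ u := by
  classical
  set W := s ∪ s.biUnion N
  have hsW : s ⊆ W := subset_union_left
  have hNW : ∀ u ∈ s, N u ⊆ W := fun u hu =>
    (subset_biUnion_of_mem N hu).trans subset_union_right
  have hgW : ∀ a b : W, g a b = -g b a := fun a b => hg a b
  obtain ⟨F, hFanti, hFbd, hFsum⟩ := exists_int_flow_of_fintype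
    (withSink fun a b : W => g a b) (withSink_antisymm hgW)
    (fun x => by rw [sum_withSink hgW]; exact zero_mem _)
  set f : V → V → ℤ := fun u v =>
    if h : u ∈ W ∧ v ∈ W then F (some ⟨u, h.1⟩) (some ⟨v, h.2⟩) else ⌊g u v⌋
  have hf : ∀ u v, ⌊g u v⌋ ≤ f u v ∧ f u v ≤ ⌈g u v⌉ := fun u v => by
    by_cases h : u ∈ W ∧ v ∈ W
    · simpa only [f, dif_pos h, withSink] using hFbd (some ⟨u, h.1⟩) (some ⟨v, h.2⟩)
    · simpa only [f, dif_neg h] using ⟨le_rfl, Int.floor_le_ceil _⟩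
  have hzero : ∀ u v, g u v = 0 → f u v = 0 := fun u v => eq_zero_of_floor_le_of_le_ceil (hf u v)
  refine ⟨f, hf, fun u hu => ⟨fun v => ?_, ?_⟩⟩
  · by_cases hv : v ∈ W
    · simp only [f, dif_pos (And.intro (hsW hu) hv), dif_pos (And.intro hv (hsW hu))]
      exact hFanti _ _
    · have huv : g u v = 0 := not_imp_comm.1 (hN u v) fun h => hv (hNW u hu h)
      rw [hzero u v huv, hzero v u (by rw [hg, huv, neg_zero]), neg_zero]
  · have hχW : ∑ b : W, g u b = χ u := by
      rw [sum_coe_sort W (g u), ← hχ u]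
      exact (sum_subset (hNW u hu) fun v _ hv => not_imp_comm.1 (hN u v) hv).symm
    rw [sum_subset (hNW u hu) fun v _ hv => hzero u v (not_imp_comm.1 (hN u v) hv),
      ← sum_coe_sort W, ← sum_some_eq_of_withSink hgW hFbd hFsum (a := ⟨u, hsW hu⟩) hχW]
    exact sum_congr rfl fun b _ => by simp only [f, dif_pos (And.intro (hsW hu) b.2)]

theorem exists_int_flow_of_finite_support (hg : ∀ u v, g u v = -g v u)
    (hsupp : ∀ u, (Function.support (g u)).Finite) (hχ : ∀ u, ∑ᶠ v, g u v = χ u) :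
    ∃ f : V → V → ℤ, (∀ u v, f u v = -f v u) ∧ (∀ u v, ⌊g u v⌋ ≤ f u v ∧ f u v ≤ ⌈g u v⌉) ∧
      ∀ u, ∑ᶠ v, f u v = χ u := by
  set N := fun u => (hsupp u).toFinset
  have hN : ∀ u v, g u v ≠ 0 → v ∈ N u := fun u v h => (hsupp u).mem_toFinset.2 h
  have hχN : ∀ u, ∑ v ∈ N u, g u v = χ u := fun u =>
    (finsum_eq_sum_of_support_subset _ (hsupp u).coe_toFinset.ge).symm.trans (hχ u)
  set box : Set (V → V → ℤ) := Set.pi Set.univ fun u => Set.pi Set.univ fun v =>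
    Set.Icc ⌊g u v⌋ ⌈g u v⌉
  set C : V → Set (V → V → ℤ) := fun u => {f | (∀ v, f u v = -f v u) ∧ ∑ v ∈ N u, f u v = χ u}
  have hbox : IsCompact box := isCompact_univ_pi fun u => isCompact_univ_pi fun v => isCompact_Icc
  have hC : ∀ u, IsClosed (C u) := fun u => by
    simp only [C, Set.ofPred_and, Set.ofPred_forall]
    exact (isClosed_iInter fun v => isClosed_eq (by fun_prop) (by fun_prop)).inter
      (isClosed_eq (by fun_prop) (by fun_prop))
  obtain ⟨f, hfbox, hfC⟩ := hbox.inter_iInter_nonempty C hC fun s => by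
    obtain ⟨f, hf, hfs⟩ := exists_int_flow_on_finset hg N hN hχN s
    exact ⟨f, fun u _ v _ => hf u v, Set.mem_iInter₂.2 hfs⟩
  have hf : ∀ u v, ⌊g u v⌋ ≤ f u v ∧ f u v ≤ ⌈g u v⌉ := fun u v => hfbox u trivial v trivial
  have hfC : ∀ u, f ∈ C u := Set.mem_iInter.1 hfC
  refine ⟨f, fun u v => (hfC u).1 v, hf, fun u => ?_⟩
  rw [finsum_eq_sum_of_support_subset (s := N u) _ fun v hv => hN u v fun h =>
    hv (eq_zero_of_floor_le_of_le_ceil (hf u v) h)]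
  exact (hfC u).2

end Compactness

/-- Integral Flow Theorem for locally finite graphs: if a locally finite graph `G`
admits a real-valued `χ`-flow `g` for an integer-valued demand `χ`, then it admits an
integer-valued `χ`-flow `f` with `|f u v - g u v| < 1` on every pair of vertices. -/
theorem integral_flow_theorem {V : Type*} (G : SimpleGraph V)
    (hfin : ∀ u : V, (G.neighborSet u).Finite)
    (χ : V → ℤ) (g : V → V → ℝ)
    (hganti : ∀ u v : V, g u v = - g v u)
    (hgsupp : ∀ u v : V, ¬ G.Adj u v → g u v = 0)
    (hgout : ∀ u : V, ∑ᶠ v, g u v = (χ u : ℝ)) :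
    ∃ f : V → V → ℤ,
      (∀ u v : V, f u v = - f v u) ∧
      (∀ u v : V, ¬ G.Adj u v → f u v = 0) ∧
      (∀ u : V, ∑ᶠ v, f u v = χ u) ∧
      (∀ u v : V, |(f u v : ℝ) - g u v| < 1) := by
  have hsupp : ∀ u, (Function.support (g u)).Finite := fun u =>
    (hfin u).subset fun v hv => not_imp_comm.1 (hgsupp u v) hv
  obtain ⟨f, hf, hfg, hsum⟩ := exists_int_flow_of_finite_support hganti hsupp hgout
  refine ⟨f, hf, fun u v huv => eq_zero_of_floor_le_of_le_ceil (hfg u v) (hgsupp u v huv), hsum,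
    fun u v => abs_sub_lt_iff.2 ⟨?_, ?_⟩⟩
  · linarith [(Int.cast_le (R := ℝ)).2 (hfg u v).2, Int.ceil_lt_add_one (g u v)]
  · linarith [(Int.cast_le (R := ℝ)).2 (hfg u v).1, Int.lt_floor_add_one (g u v)]
end

section
/- Let Z ⊆ 𝕋^k be a Jordan measurable set and let Z_1, …, Z_N be pairwise disjoint subsets of Z. Suppose that for every ε > 0 there exist Jordan measurable sets Z_j' ⊆ Z_j (for 1 ≤ j ≤ N) such that λ(Z ∖ ⋃_{j=1}^N Z_j') < ε, where λ is Lebesgue measure. Then each of the sets Z_1, …, Z_N is Jordan measurable. -/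
/-!
Fix `j` and an approximation `Z'`. Since the `Zs i` are disjoint, `Zs j` is sandwiched between
`Z' j` and `W = Z \ ⋃_{i ≠ j} Z' i`. Both of these have null frontier, and the frontier of a set
sandwiched between `A ⊆ B` lies in `frontier A ∪ frontier B ∪ (B \ A)`. Here
`W \ Z' j ⊆ Z \ ⋃ i, Z' i` has measure `< ε`, so `frontier (Zs j)` is null.
-/

open MeasureTheory Set

section Topology

variable {X : Type*} [TopologicalSpace X]

theorem frontier_iUnion_subset_of_finite {ι : Type*} [Finite ι] (f : ι → Set X) :
    frontier (⋃ i, f i) ⊆ ⋃ i, frontier (f i) := by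
  rintro x ⟨hx_closure, hx_interior⟩
  rw [closure_iUnion_of_finite, mem_iUnion] at hx_closure
  obtain ⟨i, hxi⟩ := hx_closure
  exact mem_iUnion.2 ⟨i, hxi, fun h => hx_interior (interior_mono (subset_iUnion f i) h)⟩

theorem frontier_diff_subset (s t : Set X) : frontier (s \ t) ⊆ frontier s ∪ frontier t := by
  rw [sdiff_eq, ← frontier_compl t]
  exact (frontier_inter_subset s tᶜ).trans (union_subset_union inter_subset_left inter_subset_right)

theorem frontier_subset_diff_union_frontier_union_frontier {a s b : Set X}
    (has : a ⊆ s) (hsb : s ⊆ b) : frontier s ⊆ (b \ a) ∪ frontier a ∪ frontier b := by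
  rintro x ⟨hx_closure, hx_interior⟩
  have hx_not_interior_a : x ∉ interior a := fun h => hx_interior (interior_mono has h)
  by_cases hxb : x ∈ b
  · by_cases hxa : x ∈ a
    · exact Or.inl (Or.inr ⟨subset_closure hxa, hx_not_interior_a⟩)
    · exact Or.inl (Or.inl ⟨hxb, hxa⟩)
  · exact Or.inr ⟨closure_mono hsb hx_closure, fun h => hxb (interior_subset h)⟩

end Topology

section Measure

variable {X : Type*} [TopologicalSpace X] [MeasurableSpace X] {μ : Measure X}

theorem measure_frontier_diff_iUnion_eq_zero {ι : Type*} [Finite ι] {s : Set X} {t : ι → Set X}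
    (hs : μ (frontier s) = 0) (ht : ∀ i, μ (frontier (t i)) = 0) :
    μ (frontier (s \ ⋃ i, t i)) = 0 := by
  refine measure_mono_null ((frontier_diff_subset _ _).trans
    (union_subset_union_right _ (frontier_iUnion_subset_of_finite t))) ?_
  exact measure_union_null hs (measure_iUnion_null ht)

theorem measure_frontier_le_of_subset_of_subset {a s b : Set X} (has : a ⊆ s) (hsb : s ⊆ b)
    (ha : μ (frontier a) = 0) (hb : μ (frontier b) = 0) : μ (frontier s) ≤ μ (b \ a) :=
  calc μ (frontier s) ≤ μ ((b \ a) ∪ frontier a ∪ frontier b) :=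
        measure_mono (frontier_subset_diff_union_frontier_union_frontier has hsb)
    _ ≤ μ (b \ a) + μ (frontier a ∪ frontier b) := by
        rw [union_assoc]; exact measure_union_le _ _
    _ = μ (b \ a) := by rw [measure_union_null ha hb, add_zero]

theorem measure_frontier_le_of_disjoint_approx {ι : Type*} [Finite ι] {Z : Set X}
    {Zs Z' : ι → Set X} (hsub : ∀ i, Zs i ⊆ Z) (hdisj : Pairwise (Function.onFun Disjoint Zs))
    (hZ : μ (frontier Z) = 0) (hZ'sub : ∀ i, Z' i ⊆ Zs i) (hZ' : ∀ i, μ (frontier (Z' i)) = 0)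
    (j : ι) : μ (frontier (Zs j)) ≤ μ (Z \ ⋃ i, Z' i) := by
  set W := Z \ ⋃ i : {i // i ≠ j}, Z' i
  have hZs_sub_W : Zs j ⊆ W := fun x hx => ⟨hsub j hx, by
    rw [mem_iUnion]
    rintro ⟨⟨i, hij⟩, hxi⟩
    exact disjoint_left.mp (hdisj hij) (hZ'sub i hxi) hx⟩
  have hW_diff : W \ Z' j ⊆ Z \ ⋃ i, Z' i := by
    rintro x ⟨⟨hxZ, hxW⟩, hxj⟩
    refine ⟨hxZ, mem_iUnion.not.2 fun ⟨i, hxi⟩ => ?_⟩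
    obtain rfl | hij := eq_or_ne i j
    · exact hxj hxi
    · exact hxW (mem_iUnion.2 ⟨⟨i, hij⟩, hxi⟩)
  calc μ (frontier (Zs j)) ≤ μ (W \ Z' j) :=
        measure_frontier_le_of_subset_of_subset (hZ'sub j) hZs_sub_W (hZ' j)
          (measure_frontier_diff_iUnion_eq_zero hZ fun i => hZ' i)
    _ ≤ μ (Z \ ⋃ i, Z' i) := measure_mono hW_diff

end Measure

/-- If `Z₁, …, Z_N` are pairwise disjoint subsets of a Jordan measurable set
`Z ⊆ 𝕋^k` and, for every `ε > 0`, there are Jordan measurable subsets `Z_j' ⊆ Z_j`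
with `λ(Z ∖ ⋃ⱼ Z_j') < ε`, then all the sets `Z₁, …, Z_N` are Jordan measurable.
(Jordan measurability of a subset of the torus means that its topological boundary
is Lebesgue null.) -/
theorem jordan_measurable_limit {k : ℕ} {N : ℕ}
    (Z : Set (Fin k → AddCircle (1 : ℝ)))
    (Zs : Fin N → Set (Fin k → AddCircle (1 : ℝ)))
    (hsub : ∀ j, Zs j ⊆ Z)
    (hdisj : Pairwise (Function.onFun Disjoint Zs))
    (hZ : volume (frontier Z) = 0)
    (happrox : ∀ ε : ℝ, 0 < ε → ∃ Z' : Fin N → Set (Fin k → AddCircle (1 : ℝ)),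
      (∀ j, Z' j ⊆ Zs j) ∧ (∀ j, volume (frontier (Z' j)) = 0) ∧
      volume (Z \ ⋃ j, Z' j) < ENNReal.ofReal ε) :
    ∀ j, volume (frontier (Zs j)) = 0 := by
  intro j
  refine le_antisymm (ENNReal.le_of_forall_pos_le_add fun ε hε _ => ?_) zero_le
  obtain ⟨Z', hZ'sub, hZ', hsmall⟩ := happrox ε (NNReal.coe_pos.2 hε)
  calc volume (frontier (Zs j)) ≤ volume (Z \ ⋃ i, Z' i) :=
        measure_frontier_le_of_disjoint_approx hsub hdisj hZ hZ'sub hZ' j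
    _ ≤ 0 + ε := by rw [zero_add, ← ENNReal.ofReal_coe_nnreal]; exact hsmall.le
end

section
/- Consider the graph on ℤ^d (d ≥ 1) in which two vectors are adjacent if and only if their difference has ℓ∞-norm exactly 1. Let u, v ∈ ℤ^d be adjacent, let t_0 be the number of coordinates i with u_i = v_i and t_1 = d − t_0 (so t_1 ≥ 1). Then the number of common neighbours of u and v equals (3^{t_0} − 1)·2^{t_1} + 2^{t_1} − 2. In particular, every edge of this graph lies in an even number of triangles. -/
/-!
A common neighbour `w` of `u` and `v` is a point other than `u`, `v` whose every coordinate
lies within distance `1` of both `u i` and `v i`. Coordinatewise this is an interval with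
three points where `u i = v i` and two where `|u i - v i| = 1`, so the common neighbours are
a box of `3 ^ t₀ * 2 ^ t₁` points with `u` and `v` removed. Since `t₁ ≥ 1` this count is even.
-/

/-- The graph on `ℤ^d` in which two vectors are adjacent iff their difference has
`ℓ∞`-norm exactly `1`. -/
def latticeGraph (d : ℕ) : SimpleGraph (Fin d → ℤ) where
  Adj u v := u ≠ v ∧ ∀ i, |u i - v i| ≤ 1
  symm := by
    constructor
    intro u v h
    exact ⟨h.1.symm, fun i => by rw [abs_sub_comm]; exact h.2 i⟩
  loopless := by
    constructor
    intro u h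
    exact h.1 rfl

open Finset

namespace Int

theorem mem_Icc_max_min_iff {a b x : ℤ} :
    x ∈ Icc (max a b - 1) (min a b + 1) ↔ |a - x| ≤ 1 ∧ |b - x| ≤ 1 := by
  simp only [mem_Icc, abs_le]
  omega

theorem card_Icc_max_min {a b : ℤ} (h : |a - b| ≤ 1) :
    #(Icc (max a b - 1) (min a b + 1)) = if a = b then 3 else 2 := by
  rw [Int.card_Icc]
  rw [abs_le] at h
  split_ifs <;> omega

end Int

namespace latticeGraph

variable {d : ℕ}

noncomputable def commonBox (u v : Fin d → ℤ) : Finset (Fin d → ℤ) :=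
  Fintype.piFinset fun i => Icc (max (u i) (v i) - 1) (min (u i) (v i) + 1)

theorem mem_commonBox {u v w : Fin d → ℤ} :
    w ∈ commonBox u v ↔ ∀ i, |u i - w i| ≤ 1 ∧ |v i - w i| ≤ 1 := by
  simp only [commonBox, Fintype.mem_piFinset, Int.mem_Icc_max_min_iff]

theorem commonNeighbors_eq (u v : Fin d → ℤ) :
    (latticeGraph d).commonNeighbors u v = ↑(commonBox u v \ {u, v}) := by
  ext w
  simp only [SimpleGraph.mem_commonNeighbors, latticeGraph, coe_sdiff, Set.mem_sdiff, mem_coe,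
    mem_commonBox, coe_insert, coe_singleton, Set.mem_insert_iff, Set.mem_singleton_iff,
    forall_and]
  grind

theorem card_commonBox {u v : Fin d → ℤ} (h : ∀ i, |u i - v i| ≤ 1) :
    #(commonBox u v) = 3 ^ #{i | u i = v i} * 2 ^ #{i | u i ≠ v i} := by
  rw [commonBox, Fintype.card_piFinset, Fintype.prod_congr _ _ fun i => Int.card_Icc_max_min (h i),
    prod_ite, prod_const, prod_const]

theorem ncard_commonNeighbors {u v : Fin d → ℤ} (huv : (latticeGraph d).Adj u v) :
    ((latticeGraph d).commonNeighbors u v).ncard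
      = 3 ^ #{i | u i = v i} * 2 ^ #{i | u i ≠ v i} - 2 := by
  have hsub : {u, v} ⊆ commonBox u v := by
    simp only [insert_subset_iff, singleton_subset_iff, mem_commonBox, sub_self, abs_zero,
      zero_le_one, and_true, true_and]
    exact ⟨fun i => abs_sub_comm (u i) (v i) ▸ huv.2 i, huv.2⟩
  rw [commonNeighbors_eq, Set.ncard_coe_finset, card_sdiff_of_subset hsub, card_commonBox huv.2,
    card_pair huv.1]

end latticeGraph

theorem even_three_pow_mul_two_pow_sub_two (a : ℕ) {b : ℕ} (hb : b ≠ 0) :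
    Even (3 ^ a * 2 ^ b - 2) := by
  obtain ⟨c, rfl⟩ := Nat.exists_eq_succ_of_ne_zero hb
  have : 1 ≤ 3 ^ a * 2 ^ c := Nat.one_le_iff_ne_zero.mpr (by positivity)
  exact ⟨3 ^ a * 2 ^ c - 1, by rw [pow_succ, ← mul_assoc]; omega⟩

/-- If `u, v` are adjacent in the `ℓ∞`-lattice graph on `ℤ^d`, `t₀` is the number of
coordinates where they agree and `t₁ = d - t₀`, then the number of their common
neighbours is `(3^{t₀} - 1)·2^{t₁} + 2^{t₁} - 2`; in particular, every edge lies in an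
even number of triangles. -/
theorem latticeGraph_common_neighbors (d : ℕ) (u v : Fin d → ℤ)
    (huv : (latticeGraph d).Adj u v)
    (t₀ t₁ : ℕ)
    (ht₀ : t₀ = (Finset.univ.filter (fun i : Fin d => u i = v i)).card)
    (ht₁ : t₁ = d - t₀) :
    {w : Fin d → ℤ | (latticeGraph d).Adj u w ∧ (latticeGraph d).Adj v w}.ncard
        = (3 ^ t₀ - 1) * 2 ^ t₁ + 2 ^ t₁ - 2 ∧
    Even {w : Fin d → ℤ | (latticeGraph d).Adj u w ∧ (latticeGraph d).Adj v w}.ncard := by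
  have ht₁' : t₁ = #{i | u i ≠ v i} := by
    have hsplit := card_filter_add_card_filter_not (s := univ) (fun i : Fin d => u i = v i)
    simp only [card_univ, Fintype.card_fin, ← ne_eq] at hsplit
    omega
  have hcount : {w | (latticeGraph d).Adj u w ∧ (latticeGraph d).Adj v w}.ncard
      = 3 ^ t₀ * 2 ^ t₁ - 2 := by
    rw [ht₀, ht₁']
    exact latticeGraph.ncard_commonNeighbors huv
  have ht₁_pos : t₁ ≠ 0 := by
    obtain ⟨i, hi⟩ := Function.ne_iff.mp huv.1
    rw [ht₁']
    exact (card_pos.mpr ⟨i, by simpa using hi⟩).ne'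
  have htwo_le : 2 ≤ 2 ^ t₁ := Nat.le_self_pow ht₁_pos 2
  have hle_box : 2 ^ t₁ ≤ 3 ^ t₀ * 2 ^ t₁ := Nat.le_mul_of_pos_left _ (by positivity)
  rw [hcount, Nat.sub_one_mul]
  exact ⟨by omega, even_three_pow_mul_two_pow_sub_two t₀ ht₁_pos⟩
end

section
/- Let G be the graph on ℤ^d with u adjacent to v iff ‖u − v‖_∞ = 1, let S ⊆ ℤ^d, and let ∂_E S be the set of edges of G with exactly one endpoint in S. Define the graph △ on vertex set ∂_E S in which two boundary edges are adjacent iff they lie in a common triangle of G. Then every vertex of △ has even degree. -/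
/-- The set of boundary edges of `S` in the `ℓ∞`-lattice graph on `ℤ^d`, each
represented by its ordered pair `(u, v)` with `u ∈ S` and `v ∉ S`. -/
def boundaryEdges (d : ℕ) (S : Set (Fin d → ℤ)) : Set ((Fin d → ℤ) × (Fin d → ℤ)) :=
  {p | p.1 ∈ S ∧ p.2 ∉ S ∧ (latticeGraph d).Adj p.1 p.2}

/-- Two boundary edges lie in a common triangle of the `ℓ∞`-lattice graph. -/
def inCommonTriangle (d : ℕ) (p q : (Fin d → ℤ) × (Fin d → ℤ)) : Prop :=
  ∃ x y z : Fin d → ℤ,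
    (latticeGraph d).Adj x y ∧ (latticeGraph d).Adj y z ∧ (latticeGraph d).Adj x z ∧
    ({p.1, p.2} : Set (Fin d → ℤ)) ⊆ {x, y, z} ∧
    ({q.1, q.2} : Set (Fin d → ℤ)) ⊆ {x, y, z}

lemma even_ncard_univ_pi {ι : Type*} [Fintype ι] {α : ι → Type*} {t : ∀ i, Set (α i)} (i : ι)
    (ht : Even (t i).ncard) : Even (Set.univ.pi t).ncard := by
  rw [← Nat.card_coe_set_eq, Nat.card_congr (Equiv.Set.univPi t), Nat.card_pi, even_iff_two_dvd]
  rw [← Nat.card_coe_set_eq, even_iff_two_dvd] at ht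
  exact ht.trans (Finset.dvd_prod_of_mem _ (Finset.mem_univ i))

lemma Int.setOf_abs_sub_le_one_and_abs_sub_le_one {a b : ℤ} (hab : a ≠ b) (h : |a - b| ≤ 1) :
    {c : ℤ | |a - c| ≤ 1 ∧ |b - c| ≤ 1} = {a, b} := by
  ext c
  simp only [Set.mem_ofPred_eq, Set.mem_insert_iff, Set.mem_singleton_iff, abs_le] at h ⊢
  omega

lemma SimpleGraph.exists_mem_commonNeighbors_of_mem_triangle {V : Type*} {G : SimpleGraph V}
    {x y z u v : V} (hxy : G.Adj x y) (hyz : G.Adj y z) (hxz : G.Adj x z)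
    (hu : u ∈ ({x, y, z} : Set V)) (hv : v ∈ ({x, y, z} : Set V)) (huv : u ≠ v) :
    ∃ w ∈ G.commonNeighbors u v, ({x, y, z} : Set V) ⊆ {u, v, w} := by
  simp only [Set.mem_insert_iff, Set.mem_singleton_iff] at hu hv
  rcases hu with hu | hu | hu <;> rcases hv with hv | hv | hv <;> subst u v <;>
    first
    | exact absurd rfl huv
    | (refine ⟨x, ⟨?_, ?_⟩, by simp [Set.insert_subset_iff]⟩ <;>
        first | assumption | (apply G.adj_symm; assumption))
    | (refine ⟨y, ⟨?_, ?_⟩, by simp [Set.insert_subset_iff]⟩ <;>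
        first | assumption | (apply G.adj_symm; assumption))
    | (refine ⟨z, ⟨?_, ?_⟩, by simp [Set.insert_subset_iff]⟩ <;> assumption)

namespace latticeGraph

variable {d : ℕ}

lemma commonNeighbors_eq_s8 (u v : Fin d → ℤ) :
    (latticeGraph d).commonNeighbors u v =
      Set.univ.pi (fun i => {c | |u i - c| ≤ 1 ∧ |v i - c| ≤ 1}) \ {u, v} := by
  ext w
  simp only [SimpleGraph.mem_commonNeighbors, latticeGraph, Set.mem_sdiff, Set.mem_univ_pi,
    Set.mem_ofPred_eq, Set.mem_insert_iff, Set.mem_singleton_iff]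
  constructor
  · rintro ⟨⟨hu, hu'⟩, hv, hv'⟩
    exact ⟨fun i => ⟨hu' i, hv' i⟩, by rintro (rfl | rfl) <;> simp_all⟩
  · rintro ⟨hw, hne⟩
    push Not at hne
    exact ⟨⟨hne.1.symm, fun i => (hw i).1⟩, hne.2.symm, fun i => (hw i).2⟩

lemma even_ncard_commonNeighbors {u v : Fin d → ℤ} (huv : (latticeGraph d).Adj u v) :
    Even ((latticeGraph d).commonNeighbors u v).ncard := by
  obtain ⟨hne, hclose⟩ := huv
  obtain ⟨i, hi⟩ := Function.ne_iff.mp hne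
  have hbox : Even (Set.univ.pi fun i => {c | |u i - c| ≤ 1 ∧ |v i - c| ≤ 1}).ncard :=
    even_ncard_univ_pi i <| by
      rw [Int.setOf_abs_sub_le_one_and_abs_sub_le_one hi (hclose i), Set.ncard_pair hi]
      exact even_two
  have huv_mem : ({u, v} : Set (Fin d → ℤ)) ⊆
      Set.univ.pi fun i => {c | |u i - c| ≤ 1 ∧ |v i - c| ≤ 1} := by
    refine Set.pair_subset (fun i _ => ⟨?_, ?_⟩) (fun i _ => ⟨?_, ?_⟩) <;>
      simp [hclose i, abs_sub_comm (v i)]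
  rw [commonNeighbors_eq_s8, Set.ncard_sdiff huv_mem, Set.ncard_pair hne]
  exact hbox.tsub even_two

end latticeGraph

open Classical in
noncomputable def otherBoundaryEdge {V : Type*} (S : Set V) (u v w : V) : V × V :=
  if w ∈ S then (w, v) else (u, w)

lemma otherBoundaryEdge_injOn {V : Type*} (G : SimpleGraph V) (S : Set V) (u v : V) :
    Set.InjOn (otherBoundaryEdge S u v) (G.commonNeighbors u v) := by
  intro w hw w' hw' h
  have hwu : w ≠ u := (G.mem_commonNeighbors.mp hw).1.ne.symm
  have hw'u : w' ≠ u := (G.mem_commonNeighbors.mp hw').1.ne.symm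
  unfold otherBoundaryEdge at h
  split_ifs at h <;> simp_all

section

variable {d : ℕ} {S : Set (Fin d → ℤ)} {u v : Fin d → ℤ}

lemma inCommonTriangle_of_subset {w : Fin d → ℤ} (hw : w ∈ (latticeGraph d).commonNeighbors u v)
    (huv : (latticeGraph d).Adj u v) {q : (Fin d → ℤ) × (Fin d → ℤ)}
    (hq : ({q.1, q.2} : Set (Fin d → ℤ)) ⊆ {u, v, w}) : inCommonTriangle d (u, v) q :=
  ⟨u, v, w, huv, hw.2, hw.1, by simp [Set.insert_subset_iff], hq⟩

lemma otherBoundaryEdge_mem (hp : (u, v) ∈ boundaryEdges d S) {w : Fin d → ℤ}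
    (hw : w ∈ (latticeGraph d).commonNeighbors u v) :
    otherBoundaryEdge S u v w ∈ boundaryEdges d S ∧ otherBoundaryEdge S u v w ≠ (u, v) ∧
      inCommonTriangle d (u, v) (otherBoundaryEdge S u v w) := by
  obtain ⟨hu, hv, huv⟩ := hp
  obtain ⟨huw, hvw⟩ := (latticeGraph d).mem_commonNeighbors.mp hw
  unfold otherBoundaryEdge
  split_ifs with hwS
  · exact ⟨⟨hwS, hv, hvw.symm⟩, by simp [huw.ne.symm],
      inCommonTriangle_of_subset hw huv (by simp [Set.insert_subset_iff])⟩
  · exact ⟨⟨hu, hwS, huw⟩, by simp [hvw.ne.symm],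
      inCommonTriangle_of_subset hw huv (by simp [Set.insert_subset_iff])⟩

lemma exists_otherBoundaryEdge_eq (hp : (u, v) ∈ boundaryEdges d S)
    {q : (Fin d → ℤ) × (Fin d → ℤ)} (hq : q ∈ boundaryEdges d S) (hqp : q ≠ (u, v))
    (hpq : inCommonTriangle d (u, v) q) :
    ∃ w ∈ (latticeGraph d).commonNeighbors u v, otherBoundaryEdge S u v w = q := by
  obtain ⟨hu, hv, huv⟩ := hp
  obtain ⟨a, b⟩ := q
  obtain ⟨ha, hb, hab⟩ := hq
  obtain ⟨x, y, z, hxy, hyz, hxz, hp_sub, hq_sub⟩ := hpq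
  obtain ⟨w, hw, hsub⟩ := SimpleGraph.exists_mem_commonNeighbors_of_mem_triangle hxy hyz hxz
    (hp_sub (by simp)) (hp_sub (by simp)) huv.ne
  refine ⟨w, hw, ?_⟩
  have ha' := hsub (hq_sub (by simp) : a ∈ _)
  have hb' := hsub (hq_sub (by simp) : b ∈ _)
  simp only [Set.mem_insert_iff, Set.mem_singleton_iff] at ha' hb'
  unfold otherBoundaryEdge
  rcases ha' with rfl | rfl | rfl <;> rcases hb' with rfl | rfl | rfl <;> simp_all

lemma otherBoundaryEdge_image_commonNeighbors (hp : (u, v) ∈ boundaryEdges d S) :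
    otherBoundaryEdge S u v '' (latticeGraph d).commonNeighbors u v =
      {q | q ∈ boundaryEdges d S ∧ q ≠ (u, v) ∧ inCommonTriangle d (u, v) q} := by
  ext q
  constructor
  · rintro ⟨w, hw, rfl⟩
    exact otherBoundaryEdge_mem hp hw
  · rintro ⟨hq, hqp, hpq⟩
    exact exists_otherBoundaryEdge_eq hp hq hqp hpq

end

/-- In the graph on the boundary edges `∂_E S` of a set `S ⊆ ℤ^d`, where two boundary
edges are adjacent iff they lie in a common triangle of the `ℓ∞`-lattice graph, every
vertex has even degree. -/
theorem boundaryEdges_even_degree (d : ℕ) (S : Set (Fin d → ℤ))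
    (p : (Fin d → ℤ) × (Fin d → ℤ)) (hp : p ∈ boundaryEdges d S) :
    Even {q | q ∈ boundaryEdges d S ∧ q ≠ p ∧ inCommonTriangle d p q}.ncard := by
  obtain ⟨u, v⟩ := p
  rw [← otherBoundaryEdge_image_commonNeighbors hp,
    (otherBoundaryEdge_injOn _ S u v).ncard_image]
  exact latticeGraph.even_ncard_commonNeighbors hp.2.2
end

section
/- Let G be a graph, r' ≥ 5 an integer, and let Y ⊆ V(G) be maximally r'-discrete. Set s := ⌊2r'/5⌋ and L := N_s[Y]. Then every connected component of the induced subgraph G↾L equals N_s[y] for a unique y ∈ Y, has diameter at most 4r'/5, and any two distinct components of G↾L are at graph distance at least r'/5 from each other. -/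
/-!
Because `5 s ≤ 2 r'`, the centres `Y` are `(2s+1)`-separated. A vertex of `L` adjacent to the
ball `N_s[y]` has its own centre within `2s+1` of `y`, so that centre is `y`: no edge of `G↾L`
leaves a ball. Conversely each ball is connected in `G↾L` along geodesics to its centre. Hence
the components of `G↾L` are exactly the balls, of diameter at most `2s ≤ 4r'/5`, and points of
different balls are at distance more than `r' - 2s ≥ r'/5`.
-/

namespace SimpleGraph

variable {V : Type*} (G : SimpleGraph V)

def closedBall (y : V) (s : ℕ) : Set V := {w | G.edist w y ≤ s}

def cthickening (s : ℕ) (Y : Set V) : Set V := {v | ∃ y ∈ Y, G.edist v y ≤ s}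

def IsSeparated (r : ℕ) (Y : Set V) : Prop := Y.Pairwise fun x y => (r : ℕ∞) < G.edist x y

variable {G}

theorem mem_closedBall_self (y : V) (s : ℕ) : y ∈ G.closedBall y s := by
  simp [closedBall, edist_self]

theorem closedBall_subset_cthickening {Y : Set V} {y : V} (hy : y ∈ Y) (s : ℕ) :
    G.closedBall y s ⊆ G.cthickening s Y :=
  fun _ hw => ⟨y, hy, hw⟩

theorem Reachable.mem_of_adj_mem {S : Set V} (hS : ∀ ⦃u v⦄, G.Adj u v → u ∈ S → v ∈ S)
    {u v : V} (h : G.Reachable u v) (hu : u ∈ S) : v ∈ S := by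
  obtain ⟨p⟩ := h
  induction p with
  | nil => exact hu
  | cons huv _ ih => exact ih (hS huv hu)

theorem reachable_induce_of_closedBall_subset {L : Set V} {y w : V} {n : ℕ}
    (hL : G.closedBall y n ⊆ L) (hw : w ∈ G.closedBall y n) :
    (G.induce L).Reachable ⟨w, hL hw⟩ ⟨y, hL (mem_closedBall_self y n)⟩ := by
  classical
  obtain ⟨p, hp⟩ := exists_walk_of_edist_ne_top (ne_top_of_le_ne_top (ENat.natCast_ne_top n) hw)
  have hsupp : ∀ u ∈ p.support, u ∈ G.closedBall y n := fun u hu =>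
    calc G.edist u y ≤ (p.dropUntil u hu).length := edist_le _
      _ ≤ p.length := by exact_mod_cast p.length_dropUntil_le_length hu
      _ = G.edist w y := hp
      _ ≤ n := hw
  exact ⟨p.induce L fun u hu => hL (hsupp u hu)⟩

theorem edist_le_add_edist_add {v w y y' : V} {s t : ℕ} (hv : v ∈ G.closedBall y s)
    (hw : w ∈ G.closedBall y' t) : G.edist y y' ≤ s + G.edist v w + t :=
  calc G.edist y y' ≤ G.edist y v + G.edist v w + G.edist w y' :=
        G.edist_triangle.trans (add_le_add_left G.edist_triangle _)
    _ ≤ s + G.edist v w + t := by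
        rw [edist_comm (u := y)]
        exact add_le_add (add_le_add hv le_rfl) hw

namespace IsSeparated

variable {r : ℕ} {Y : Set V}

theorem mono {r' : ℕ} (hY : G.IsSeparated r' Y) (h : r ≤ r') : G.IsSeparated r Y :=
  hY.mono' fun _ _ => (Nat.cast_le.mpr h).trans_lt

theorem eq_of_edist_le (hY : G.IsSeparated r Y) {x y : V} (hx : x ∈ Y) (hy : y ∈ Y)
    (h : G.edist x y ≤ r) : x = y := by
  by_contra hne
  exact (hY hx hy hne).not_ge h

theorem eq_of_mem_closedBall {s t : ℕ} (hY : G.IsSeparated (s + t) Y) {v y y' : V}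
    (hy : y ∈ Y) (hy' : y' ∈ Y) (hv : v ∈ G.closedBall y s) (hv' : v ∈ G.closedBall y' t) :
    y = y' :=
  hY.eq_of_edist_le hy hy' <| by
    simpa [edist_self] using edist_le_add_edist_add hv hv'

theorem mem_closedBall_of_adj {s : ℕ} (hY : G.IsSeparated (2 * s + 1) Y) {y a c : V}
    (hy : y ∈ Y) (ha : a ∈ G.closedBall y s) (hc : c ∈ G.cthickening s Y) (hac : G.Adj a c) :
    c ∈ G.closedBall y s := by
  obtain ⟨y', hy', hcy'⟩ := hc
  have hc1 : c ∈ G.closedBall y (s + 1) :=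
    calc G.edist c y ≤ G.edist c a + G.edist a y := G.edist_triangle
      _ ≤ 1 + s := add_le_add (edist_eq_one_iff_adj.mpr hac.symm).le ha
      _ = (s + 1 : ℕ) := by push_cast; ring
  have hsep : G.IsSeparated (s + 1 + s) Y := hY.mono (by omega)
  rwa [hsep.eq_of_mem_closedBall hy hy' hc1 hcy']

theorem reachable_induce_cthickening_iff {s : ℕ} (hY : G.IsSeparated (2 * s + 1) Y) {y : V}
    (hy : y ∈ Y) {v w : G.cthickening s Y} (hv : (v : V) ∈ G.closedBall y s) :
    (G.induce (G.cthickening s Y)).Reachable v w ↔ (w : V) ∈ G.closedBall y s := by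
  constructor
  · intro h
    refine h.mem_of_adj_mem (S := {x : G.cthickening s Y | (x : V) ∈ G.closedBall y s}) ?_ hv
    intro a c hac ha
    exact hY.mem_closedBall_of_adj hy ha c.2 hac
  · intro hw
    have hsub := closedBall_subset_cthickening (G := G) hy s
    exact (reachable_induce_of_closedBall_subset hsub hv).trans
      (reachable_induce_of_closedBall_subset hsub hw).symm

theorem edist_le_of_reachable_induce_cthickening {s : ℕ} (hY : G.IsSeparated (2 * s + 1) Y)
    {v w : G.cthickening s Y} (h : (G.induce (G.cthickening s Y)).Reachable v w) :
    G.edist v w ≤ (2 * s : ℕ) := by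
  obtain ⟨y, hy, hvy⟩ := v.2
  have hwy : G.edist y w ≤ s := by
    rw [edist_comm]
    exact (hY.reachable_induce_cthickening_iff hy hvy).1 h
  calc G.edist v w ≤ G.edist v y + G.edist y w := G.edist_triangle
    _ ≤ s + s := add_le_add hvy hwy
    _ = (2 * s : ℕ) := by push_cast; ring

theorem lt_add_edist_add_of_not_reachable_induce_cthickening {s : ℕ} (hY : G.IsSeparated r Y)
    (hr : 2 * s + 1 ≤ r) {v w : G.cthickening s Y}
    (h : ¬ (G.induce (G.cthickening s Y)).Reachable v w) :
    (r : ℕ∞) < s + G.edist v w + s := by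
  obtain ⟨y, hy, hvy⟩ := v.2
  obtain ⟨y', hy', hwy'⟩ := w.2
  have hne : y ≠ y' := by
    rintro rfl
    exact h (((hY.mono hr).reachable_induce_cthickening_iff hy hvy).2 hwy')
  exact (hY hy hy' hne).trans_le (edist_le_add_edist_add hvy hwy')

end IsSeparated

end SimpleGraph

open SimpleGraph in
theorem neighborhood_of_discrete_components_general {V : Type*} (G : SimpleGraph V)
    (r' : ℕ) (hr' : 5 ≤ r')
    (Y : Set V)
    (hdisc : ∀ x ∈ Y, ∀ y ∈ Y, x ≠ y → ((r' : ℕ) : ℕ∞) < G.edist x y)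
    (s : ℕ) (hs : s = 2 * r' / 5)
    (L : Set V) (hL : L = {v : V | ∃ y ∈ Y, G.edist v y ≤ (s : ℕ∞)}) :
    (∀ v : V, ∀ hv : v ∈ L,
      ∃! y : V, y ∈ Y ∧
        {w : V | ∃ hw : w ∈ L, (G.induce L).Reachable ⟨v, hv⟩ ⟨w, hw⟩}
          = {w : V | G.edist w y ≤ (s : ℕ∞)}) ∧
    (∀ v w : ↥L, (G.induce L).Reachable v w →
      5 * G.edist (v : V) (w : V) ≤ ((4 * r' : ℕ) : ℕ∞)) ∧
    (∀ v w : ↥L, ¬ (G.induce L).Reachable v w →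
      ((r' : ℕ) : ℕ∞) ≤ 5 * G.edist (v : V) (w : V)) := by
  have h5s : 5 * s ≤ 2 * r' := hs ▸ Nat.mul_div_le (2 * r') 5
  have hdisc : G.IsSeparated r' Y := hdisc
  have hY : G.IsSeparated (2 * s + 1) Y := hdisc.mono (by omega)
  obtain rfl : L = G.cthickening s Y := hL
  refine ⟨fun v hv => ?_, fun v w h => ?_, fun v w h => ?_⟩
  · obtain ⟨y, hy, hvy⟩ := id hv
    have hcomp := fun w => hY.reachable_induce_cthickening_iff hy (v := ⟨v, hv⟩) (w := w) hvy
    refine ⟨y, ⟨hy, Set.ext fun w => ⟨fun ⟨_, h⟩ => ((hcomp _).1 h :), fun hw => ?_⟩⟩, ?_⟩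
    · exact ⟨_, (hcomp ⟨w, closedBall_subset_cthickening hy s hw⟩).2 hw⟩
    · rintro y' ⟨hy', hball⟩
      have hvy' : v ∈ {w | G.edist w y' ≤ s} := hball ▸ ⟨hv, .rfl⟩
      exact (hY.mono (by omega)).eq_of_mem_closedBall hy' hy hvy' hvy
  · calc 5 * G.edist v w ≤ 5 * ((2 * s : ℕ) : ℕ∞) := by
          gcongr; exact hY.edist_le_of_reachable_induce_cthickening h
      _ ≤ ((4 * r' : ℕ) : ℕ∞) := by norm_cast; omega
  · have hlt := hdisc.lt_add_edist_add_of_not_reachable_induce_cthickening (by omega) h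
    generalize G.edist v w = d at hlt ⊢
    cases d using ENat.recTopCoe with
    | top => simp
    | coe d => norm_cast at hlt ⊢; omega

/-- Let `Y` be a maximally `r'`-discrete set in a graph `G` with `r' ≥ 5`, and let
`L := N_s[Y]` where `s := ⌊2r'/5⌋`. Then every component of the induced subgraph `G↾L`
equals `N_s[y]` for a unique `y ∈ Y`, has diameter at most `4r'/5`, and distinct
components of `G↾L` are at graph distance at least `r'/5` from each other. -/
theorem neighborhood_of_discrete_components {V : Type*} (G : SimpleGraph V)
    (r' : ℕ) (hr' : 5 ≤ r')
    (Y : Set V)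
    (hdisc : ∀ x ∈ Y, ∀ y ∈ Y, x ≠ y → ((r' : ℕ) : ℕ∞) < G.edist x y)
    (hmax : ∀ v : V, ∃ y ∈ Y, G.edist v y ≤ (r' : ℕ∞))
    (s : ℕ) (hs : s = 2 * r' / 5)
    (L : Set V) (hL : L = {v : V | ∃ y ∈ Y, G.edist v y ≤ (s : ℕ∞)}) :
    (∀ v : V, ∀ hv : v ∈ L,
      ∃! y : V, y ∈ Y ∧
        {w : V | ∃ hw : w ∈ L, (G.induce L).Reachable ⟨v, hv⟩ ⟨w, hw⟩}
          = {w : V | G.edist w y ≤ (s : ℕ∞)}) ∧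
    (∀ v w : ↥L, (G.induce L).Reachable v w →
      5 * G.edist (v : V) (w : V) ≤ ((4 * r' : ℕ) : ℕ∞)) ∧
    (∀ v w : ↥L, ¬ (G.induce L).Reachable v w →
      ((r' : ℕ) : ℕ∞) ≤ 5 * G.edist (v : V) (w : V)) :=
  neighborhood_of_discrete_components_general G r' hr' Y hdisc s hs L hL
end

section
/- Define r_i' := 100^{2^{i+1}−1} for i ≥ 0 and r_i := 100^{2^{i+1}−2} for i ≥ 1. Define recursively q_0' := 0 and, for i ≥ 1: t_i := 2r_i + 4q'_{i−1} + 4, q_i := t_i + 2q'_{i−1} + 4, t'_i := ⌊4r'_i/5⌋ + 2q_i, q'_i := t'_i + 2q_i + 4. Then for all i ≥ 1 the following inequalities hold: r_i ≥ 5r'_{i−1} − 1; 5r'_i ≥ 5q'_i + 9; and r'_i ≥ 15q_i + 25. -/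
/-- Arithmetic verification of the key inequalities between the radii
`r_i = 100^{2^{i+1}-2}`, `r'_i = 100^{2^{i+1}-1}` and the recursively defined padding
parameters `t_i, q_i, t'_i, q'_i`: for all `i ≥ 1`,
`r_i ≥ 5r'_{i-1} - 1`, `5r'_i ≥ 5q'_i + 9`, and `r'_i ≥ 15q_i + 25`. -/
theorem radii_inequalities (r r' t q t' q' : ℕ → ℕ)
    (hr' : ∀ i, r' i = 100 ^ (2 ^ (i + 1) - 1))
    (hr : ∀ i, 1 ≤ i → r i = 100 ^ (2 ^ (i + 1) - 2))
    (hq'0 : q' 0 = 0)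
    (ht : ∀ i, 1 ≤ i → t i = 2 * r i + 4 * q' (i - 1) + 4)
    (hq : ∀ i, 1 ≤ i → q i = t i + 2 * q' (i - 1) + 4)
    (ht' : ∀ i, 1 ≤ i → t' i = 4 * r' i / 5 + 2 * q i)
    (hq' : ∀ i, 1 ≤ i → q' i = t' i + 2 * q i + 4) :
    ∀ i, 1 ≤ i →
      5 * r' (i - 1) ≤ r i + 1 ∧
      5 * q' i + 9 ≤ 5 * r' i ∧
      15 * q i + 25 ≤ r' i := by
  have key : ∀ i, 1 ≤ i → q' (i - 1) ≤ r' (i - 1) →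
      (5 * r' (i - 1) ≤ r i + 1 ∧ 5 * q' i + 9 ≤ 5 * r' i ∧ 15 * q i + 25 ≤ r' i)
      ∧ q' i ≤ r' i := by
    intro i hi hIH
    set a := 100 ^ (2 ^ i - 1) with ha
    have h2i : 1 ≤ 2 ^ i := Nat.one_le_two_pow
    have h2ge : 2 ≤ 2 ^ i := by
      calc 2 = 2 ^ 1 := by norm_num
        _ ≤ 2 ^ i := Nat.pow_le_pow_right (by norm_num) hi
    have ha100 : 100 ≤ a := by
      have : (100:ℕ) ^ 1 ≤ 100 ^ (2 ^ i - 1) := by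
        apply Nat.pow_le_pow_right (by norm_num)
        omega
      simpa using this
    have h2succ : 2 ^ (i + 1) = 2 * 2 ^ i := by ring
    have hri : r i = a * a := by
      rw [hr i hi, ha, ← pow_add]
      congr 1
      omega
    have hr'i : r' i = 100 * (a * a) := by
      rw [hr' i, ha, ← pow_add, ← pow_succ']
      congr 1
      omega
    have hi1 : i - 1 + 1 = i := by omega
    have hr'prev : r' (i - 1) = a := by
      rw [hr' (i - 1), hi1, ha]
    have hqi : q i = 2 * r i + 6 * q' (i - 1) + 8 := by
      rw [hq i hi, ht i hi]; ring
    have hq'i : q' i = t' i + 2 * q i + 4 := hq' i hi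
    have ht'i : t' i = 4 * r' i / 5 + 2 * q i := ht' i hi
    have hdiv : 5 * (4 * r' i / 5) ≤ 4 * r' i := by
      have := Nat.div_mul_le_self (4 * r' i) 5
      omega
    rw [hr'prev] at hIH ⊢
    have h3' : 20 * q i + 29 ≤ r' i := by
      rw [hqi, hri, hr'i]
      nlinarith
    have h3 : 15 * q i + 25 ≤ r' i := by omega
    have h2 : 5 * q' i + 9 ≤ 5 * r' i := by
      have hq8 : 8 ≤ q i := by omega
      omega
    refine ⟨⟨?_, h2, h3⟩, by omega⟩
    rw [hri]
    nlinarith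
  have main : ∀ i, q' i ≤ r' i := by
    intro i
    induction i with
    | zero => rw [hq'0, hr' 0]; positivity
    | succ n ih =>
      have := key (n + 1) (by omega) (by simpa using ih)
      exact this.2
  intro i hi
  refine (key i hi ?_).1
  exact main (i - 1)
end
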